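/- For all real numbers x ≥ 0 and y ≥ 0 one has Φ̄(−x−y) − e^{−2xy}·Φ̄(−x+y) ≥ 2·x·y·e^{−2xy}·Φ̄(−x+y). -/
import Mathlib


open Real Filter MeasureTheory

/-- Standard normal density. -/
noncomputable def stdPhi (u : ℝ) : ℝ := (Real.sqrt (2 * Real.pi))⁻¹ * Real.exp (-u ^ 2 / 2)

/-- Standard normal distribution function. -/
noncomputable def stdCdf (u : ℝ) : ℝ := ∫ s in Set.Iic u, stdPhi s

/-- Standard normal survivor function. -/
noncomputable def stdSurv (u : ℝ) : ℝ := 1 - stdCdf u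

noncomputable def fFun (x y : ℝ) : ℝ := stdSurv (x - y) - Real.exp (2 * x * y) * stdSurv (x + y)

noncomputable def gFun (x y : ℝ) : ℝ := 1 - x * stdSurv (x + y) / stdPhi (x + y)

lemma stdPhi_nonneg (u : ℝ) : 0 ≤ stdPhi u := by
  unfold stdPhi
  positivity

lemma integrable_stdPhi : Integrable stdPhi := by
  have h : Integrable (fun u : ℝ => Real.exp (-(1/2 : ℝ) * u ^ 2)) :=
    integrable_exp_neg_mul_sq (by norm_num)
  have : stdPhi = fun u : ℝ => (Real.sqrt (2 * Real.pi))⁻¹ * Real.exp (-(1/2 : ℝ) * u ^ 2) := by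
    funext u; unfold stdPhi; ring_nf
  rw [this]
  exact h.const_mul _

lemma integral_stdPhi : ∫ u, stdPhi u = 1 := by
  unfold stdPhi
  rw [MeasureTheory.integral_const_mul]
  have h : (fun u : ℝ => Real.exp (-u ^ 2 / 2)) = fun u : ℝ => Real.exp (-(1/2 : ℝ) * u ^ 2) := by
    funext u; ring_nf
  rw [h, integral_gaussian]
  have h2 : Real.sqrt (π / (1/2)) = Real.sqrt (2 * π) := by norm_num; ring_nf
  rw [h2]
  rw [inv_mul_cancel₀]
  positivity

lemma stdCdf_le_one (u : ℝ) : stdCdf u ≤ 1 := by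
  unfold stdCdf
  rw [← integral_stdPhi]
  exact setIntegral_le_integral integrable_stdPhi
    (Filter.Eventually.of_forall fun s => stdPhi_nonneg s)

lemma stdCdf_mono {a b : ℝ} (h : a ≤ b) : stdCdf a ≤ stdCdf b := by
  unfold stdCdf
  apply setIntegral_mono_set (integrable_stdPhi.integrableOn)
    (Filter.Eventually.of_forall fun s => stdPhi_nonneg s)
  exact HasSubset.Subset.eventuallyLE (Set.Iic_subset_Iic.mpr h)

lemma stdSurv_nonneg (u : ℝ) : 0 ≤ stdSurv u := by
  unfold stdSurv; linarith [stdCdf_le_one u]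

/-- Lower bound Φ̄(−x−y) − e^{−2xy}Φ̄(−x+y) ≥ 2xy·e^{−2xy}·Φ̄(−x+y) for x, y ≥ 0. -/
theorem surv_diff_ge (x y : ℝ) (hx : 0 ≤ x) (hy : 0 ≤ y) :
    2 * x * y * Real.exp (-(2 * x * y)) * stdSurv (-x + y) ≤
      stdSurv (-x - y) - Real.exp (-(2 * x * y)) * stdSurv (-x + y) := by
  set t := 2 * x * y with ht
  have ht0 : 0 ≤ t := by positivity
  have hmono : stdSurv (-x + y) ≤ stdSurv (-x - y) := by
    unfold stdSurv
    have := stdCdf_mono (show -x - y ≤ -x + y by linarith)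
    linarith
  have hS : 0 ≤ stdSurv (-x + y) := stdSurv_nonneg _
  have hexp : t * Real.exp (-t) ≤ 1 - Real.exp (-t) := by
    have h1 : t + 1 ≤ Real.exp t := Real.add_one_le_exp t
    have h2 : Real.exp (-t) = (Real.exp t)⁻¹ := Real.exp_neg t
    have h3 : 0 < Real.exp t := Real.exp_pos t
    have h4 : (Real.exp t)⁻¹ * Real.exp t = 1 := inv_mul_cancel₀ (ne_of_gt h3)
    rw [h2]
    nlinarith [inv_pos.mpr h3]
  nlinarith [mul_le_mul_of_nonneg_right hexp hS]
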